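/- For each ε ∈ (0,1], let (u_ε, v_ε) solve the ODE system with initial data u_ε(0) = exp(φ⁰_ε/ε) and v_ε(0) = v⁰_ε, where ε u_ε(0) + Q(v⁰_ε) ≤ Q_M for a constant Q_M, φ⁰_ε → φ⁰ < 0 and v⁰_ε → v⁰ > μ as ε → 0. Let v⁰_− ∈ (0,μ) be the unique solution of Q(v⁰_−) = Q(v⁰) with v⁰_− < μ, and set τ = −φ⁰/(v⁰ − μ) > 0. Then for every t with 0 ≤ t < τ, v_ε(t) → v⁰ as ε → 0, and for every t > τ, v_ε(t) → v⁰_− as ε → 0. -/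

import Mathlib

open Real Filter Topology

/-- `(u, v)` solves the ODE system `u' = ε⁻¹ u (v - μ)`, `v' = -u v` on `[0, ∞)`,
with both components positive. -/
structure IsODESol (μ ε : ℝ) (u v : ℝ → ℝ) : Prop where
  u_pos : ∀ t, 0 ≤ t → 0 < u t
  v_pos : ∀ t, 0 ≤ t → 0 < v t
  u_eq : ∀ t, 0 ≤ t → HasDerivAt u (ε⁻¹ * u t * (v t - μ)) t
  v_eq : ∀ t, 0 ≤ t → HasDerivAt v (-(u t * v t)) t

/-- `Q(s) = s - μ ln s`. -/
noncomputable def Q (μ s : ℝ) : ℝ := s - μ * Real.log s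

/-!
The energy `ε u + Q(v)` is conserved, `v` decreases, and the front variable `ψ = ε log u`
moves with speed `v - μ` from `ψ(0) = φ⁰_ε`.

Before `τ`, `ψ` stays uniformly negative on `[0, t]`, so `u` is exponentially small there and `v`
barely moves.

After `τ`: since `ε u(0) → 0`, the energy tends to `Q(v⁰) = Q(v⁰₋)`, and `Q(v(t))` lies below it;
this keeps `v(t)` from falling much below `v⁰₋`. Conversely, fix `w ∈ (μ, v⁰)`. While `v` lies
between `v⁰₋ + δ` and `w`, `Q(v)` stays a fixed amount below the energy, so `ε u` is bounded
below and `v` crosses this band in time `O(ε)`. Hence if `v(t) ≥ v⁰₋ + δ`, then `v ≥ w` up to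
time `t - O(ε)`, which makes `ψ` there close to `φ⁰ + t (w - μ) > 0`; but the energy bound
`ε u ≤ C` gives `ψ ≤ ε log (C / ε) → 0`.
-/

open Set

theorem image_sub_le_mul_sub_of_hasDerivAt_le {f f' : ℝ → ℝ} {a b C : ℝ} (hab : a ≤ b)
    (hf : ∀ x ∈ Icc a b, HasDerivAt f (f' x) x) (hC : ∀ x ∈ Icc a b, f' x ≤ C) :
    f b - f a ≤ C * (b - a) := by
  refine (convex_Icc a b).image_sub_le_mul_sub_of_deriv_le
    (fun x hx => (hf x hx).continuousAt.continuousWithinAt)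
    (fun x hx => (hf x (interior_subset hx)).differentiableAt.differentiableWithinAt)
    (fun x hx => ?_) a (left_mem_Icc.2 hab) b (right_mem_Icc.2 hab) hab
  rw [(hf x (interior_subset hx)).deriv]
  exact hC x (interior_subset hx)

theorem mul_sub_le_image_sub_of_le_hasDerivAt {f f' : ℝ → ℝ} {a b C : ℝ} (hab : a ≤ b)
    (hf : ∀ x ∈ Icc a b, HasDerivAt f (f' x) x) (hC : ∀ x ∈ Icc a b, C ≤ f' x) :
    C * (b - a) ≤ f b - f a := by
  have := image_sub_le_mul_sub_of_hasDerivAt_le (f := fun x => -f x) hab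
    (fun x hx => (hf x hx).neg) (fun x hx => neg_le_neg (hC x hx))
  linarith

theorem tendsto_div_atBot_of_tendsto_neg {l : Filter ℝ} (hl : l ≤ 𝓝[>] 0) {f : ℝ → ℝ} {c : ℝ}
    (hf : Tendsto f l (𝓝 c)) (hc : c < 0) : Tendsto (fun ε => f ε / ε) l atBot := by
  simpa only [div_eq_mul_inv] using hf.neg_mul_atTop hc (tendsto_inv_nhdsGT_zero.mono_left hl)

theorem mul_log_le_of_mul_le {ε x C : ℝ} (hε : 0 < ε) (hx : 0 < x) (h : ε * x ≤ C) :
    ε * log x ≤ ε * log C - ε * log ε := by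
  have := log_le_log (mul_pos hε hx) h
  rw [log_mul hε.ne' hx.ne'] at this
  nlinarith

theorem hasDerivAt_Q (μ : ℝ) {s : ℝ} (hs : s ≠ 0) : HasDerivAt (Q μ) (1 - μ * s⁻¹) s :=
  (hasDerivAt_id s).sub ((hasDerivAt_log hs).const_mul μ)

theorem convexOn_Q {μ : ℝ} (hμ : 0 ≤ μ) : ConvexOn ℝ (Ioi 0) (Q μ) :=
  (convexOn_id (convex_Ioi 0)).sub (strictConcaveOn_log_Ioi.concaveOn.smul hμ)

theorem strictAntiOn_Q {μ : ℝ} : StrictAntiOn (Q μ) (Ioc 0 μ) := by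
  refine strictAntiOn_of_deriv_neg (convex_Ioc 0 μ)
    (fun x hx => (hasDerivAt_Q μ hx.1.ne').continuousAt.continuousWithinAt) fun x hx => ?_
  rw [interior_Ioc] at hx
  rw [(hasDerivAt_Q μ hx.1.ne').deriv, sub_neg, ← div_eq_mul_inv, one_lt_div hx.1]
  exact hx.2

theorem strictMonoOn_Q {μ : ℝ} (hμ : 0 < μ) : StrictMonoOn (Q μ) (Ici μ) := by
  refine strictMonoOn_of_deriv_pos (convex_Ici μ)
    (fun x hx => (hasDerivAt_Q μ (hμ.trans_le hx).ne').continuousAt.continuousWithinAt)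
    fun x hx => ?_
  rw [interior_Ici] at hx
  rw [(hasDerivAt_Q μ (hμ.trans hx).ne').deriv, sub_pos, ← div_eq_mul_inv,
    div_lt_one (hμ.trans hx)]
  exact hx

theorem Q_self_le {μ s : ℝ} (hμ : 0 < μ) (hs : 0 < s) : Q μ μ ≤ Q μ s := by
  rcases le_total s μ with hsμ | hμs
  · exact strictAntiOn_Q.antitoneOn ⟨hs, hsμ⟩ ⟨hμ, le_rfl⟩ hsμ
  · exact (strictMonoOn_Q hμ).monotoneOn (mem_Ici.2 le_rfl) hμs hμs

namespace IsODESol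

variable {μ ε : ℝ} {u v : ℝ → ℝ}

theorem v_antitoneOn (h : IsODESol μ ε u v) : AntitoneOn v (Ici 0) := fun s hs t _ hst => by
  have := image_sub_le_mul_sub_of_hasDerivAt_le hst (fun x hx => h.v_eq x (hs.trans hx.1))
    fun x hx => neg_nonpos.2 (mul_pos (h.u_pos x (hs.trans hx.1)) (h.v_pos x (hs.trans hx.1))).le
  linarith

theorem hasDerivAt_energy (h : IsODESol μ ε u v) (hε : ε ≠ 0) {x : ℝ} (hx : 0 ≤ x) :
    HasDerivAt (fun s => ε * u s + Q μ (v s)) 0 x := by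
  have hv := (h.v_pos x hx).ne'
  refine (((h.u_eq x hx).const_mul ε).add
    ((hasDerivAt_Q μ hv).comp x (h.v_eq x hx))).congr_deriv ?_
  field_simp
  ring

theorem energy_eq (h : IsODESol μ ε u v) (hε : ε ≠ 0) {t : ℝ} (ht : 0 ≤ t) :
    ε * u t + Q μ (v t) = ε * u 0 + Q μ (v 0) := by
  have hd : ∀ x ∈ Icc 0 t, HasDerivAt (fun s => ε * u s + Q μ (v s)) 0 x :=
    fun x hx => h.hasDerivAt_energy hε hx.1
  have h₁ := image_sub_le_mul_sub_of_hasDerivAt_le ht hd fun _ _ => le_rfl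
  have h₂ := mul_sub_le_image_sub_of_le_hasDerivAt ht hd fun _ _ => le_rfl
  simp only [zero_mul] at h₁ h₂
  linarith

theorem mul_u_le (h : IsODESol μ ε u v) (hμ : 0 < μ) (hε : ε ≠ 0) {t : ℝ} (ht : 0 ≤ t) :
    ε * u t ≤ ε * u 0 + Q μ (v 0) - Q μ μ := by
  linarith [h.energy_eq hε ht, Q_self_le hμ (h.v_pos t ht)]

theorem hasDerivAt_mul_log_u (h : IsODESol μ ε u v) (hε : ε ≠ 0) {x : ℝ} (hx : 0 ≤ x) :
    HasDerivAt (fun s => ε * log (u s)) (v x - μ) x := by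
  refine (((h.u_eq x hx).log (h.u_pos x hx).ne').const_mul ε).congr_deriv ?_
  field_simp [(h.u_pos x hx).ne']

theorem mul_log_u_sub_le (h : IsODESol μ ε u v) (hε : ε ≠ 0) {s t : ℝ} (hs : 0 ≤ s)
    (hst : s ≤ t) : ε * log (u t) - ε * log (u s) ≤ (v s - μ) * (t - s) :=
  image_sub_le_mul_sub_of_hasDerivAt_le hst
    (fun _ hx => h.hasDerivAt_mul_log_u hε (hs.trans hx.1))
    fun _ hx => sub_le_sub_right (h.v_antitoneOn hs (hs.trans hx.1) hx.1) μ

theorem le_mul_log_u_sub (h : IsODESol μ ε u v) (hε : ε ≠ 0) {s t : ℝ} (hs : 0 ≤ s)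
    (hst : s ≤ t) : (v t - μ) * (t - s) ≤ ε * log (u t) - ε * log (u s) :=
  mul_sub_le_image_sub_of_le_hasDerivAt hst
    (fun _ hx => h.hasDerivAt_mul_log_u hε (hs.trans hx.1))
    fun _ hx => sub_le_sub_right (h.v_antitoneOn (hs.trans hx.1) (hs.trans hst) hx.2) μ

theorem v_mul_le_of_u_le (h : IsODESol μ ε u v) {s t M : ℝ} (hs : 0 ≤ s) (hst : s ≤ t)
    (hM : ∀ x ∈ Icc s t, u x ≤ M) : v s * (1 - M * (t - s)) ≤ v t := by
  have := mul_sub_le_image_sub_of_le_hasDerivAt hst (fun x hx => h.v_eq x (hs.trans hx.1))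
    fun x hx => by
      have hx0 := hs.trans hx.1
      have hvx : v x ≤ v s := h.v_antitoneOn hs hx0 hx.1
      show -(M * v s) ≤ -(u x * v x)
      nlinarith [hM x hx, h.u_pos x hx0, h.v_pos x hx0]
  linarith

theorem sub_mul_lt_of_energy_gap (h : IsODESol μ ε u v) (hε : 0 < ε) {s t a c : ℝ}
    (hs : 0 ≤ s) (hst : s ≤ t) (ha : 0 < a) (hc : 0 ≤ c)
    (hband : ∀ x ∈ Icc s t, a ≤ v x ∧ Q μ (v x) + c ≤ ε * u 0 + Q μ (v 0)) :
    (t - s) * (c * a) < ε * v s := by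
  have hdrop := image_sub_le_mul_sub_of_hasDerivAt_le (C := -(c * a / ε)) hst
    (fun x hx => h.v_eq x (hs.trans hx.1)) fun x hx => by
      have hx0 := hs.trans hx.1
      obtain ⟨hav, hQ⟩ := hband x hx
      have hcu : c ≤ ε * u x := by linarith [h.energy_eq hε.ne' hx0]
      have hrate : c * a ≤ ε * (u x * v x) := by nlinarith [h.u_pos x hx0]
      rw [neg_le_neg_iff, div_le_iff₀ hε]
      linarith
  have hvt := h.v_pos t (hs.trans hst)
  have hlt : c * a / ε * (t - s) < v s := by linarith
  rw [div_mul_eq_mul_div, div_lt_iff₀ hε] at hlt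
  linarith

theorem le_v_sub_of_energy_gap (h : IsODESol μ ε u v) (hε : 0 < ε) {b w c t : ℝ} (hb : 0 < b)
    (hbw : b ≤ w) (hc : 0 < c) (hgap : ∀ x ∈ Icc b w, Q μ x + c ≤ ε * u 0 + Q μ (v 0))
    (hbt : b ≤ v t) (hT : 0 ≤ t - ε * (w / (c * b))) : w ≤ v (t - ε * (w / (c * b))) := by
  set T := t - ε * (w / (c * b))
  have hw : 0 < w := hb.trans_le hbw
  have hTt : T ≤ t := sub_le_self _ (by positivity)
  by_contra! hvT
  have hcross := h.sub_mul_lt_of_energy_gap hε hT hTt hb hc.le fun x hx =>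
    have hvx : b ≤ v x := hbt.trans (h.v_antitoneOn (hT.trans hx.1) (hT.trans hTt) hx.2)
    ⟨hvx, hgap (v x) ⟨hvx, (h.v_antitoneOn hT (hT.trans hx.1) hx.1).trans hvT.le⟩⟩
  have htime : (t - T) * (c * b) = ε * w := by
    simp only [T]
    field_simp
    ring
  nlinarith

theorem mul_log_u_zero_add_le (h : IsODESol μ ε u v) (hμ : 0 < μ) (hε : 0 < ε)
    {b w c t C : ℝ} (hb : 0 < b) (hbw : b ≤ w) (hc : 0 < c)
    (hgap : ∀ x ∈ Icc b w, Q μ x + c ≤ ε * u 0 + Q μ (v 0))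
    (hC : ε * u 0 + Q μ (v 0) ≤ C + Q μ μ) (hbt : b ≤ v t) (hT : 0 ≤ t - ε * (w / (c * b))) :
    ε * log (u 0) + (w - μ) * (t - ε * (w / (c * b))) ≤ ε * log C - ε * log ε := by
  set T := t - ε * (w / (c * b))
  have hwT : w ≤ v T := h.le_v_sub_of_energy_gap hε hb hbw hc hgap hbt hT
  have hadvance := h.le_mul_log_u_sub hε.ne' le_rfl hT
  have hspeed : (w - μ) * T ≤ (v T - μ) * (T - 0) := by nlinarith
  have hbound := mul_log_le_of_mul_le (C := C) hε (h.u_pos T hT)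
    (by linarith [h.mul_u_le hμ hε.ne' hT])
  linarith

end IsODESol

section Limits

variable {μ φlim vlim : ℝ} {u v : ℝ → ℝ → ℝ} {l : Filter ℝ}

theorem tendsto_v_before_front (hl : l ≤ 𝓝[>] 0)
    (hsol : ∀ᶠ ε in l, IsODESol μ ε (u ε) (v ε))
    (hφ : Tendsto (fun ε => ε * log (u ε 0)) l (𝓝 φlim))
    (hv : Tendsto (fun ε => v ε 0) l (𝓝 vlim)) (hvlim : μ < vlim) {t : ℝ} (ht : 0 ≤ t)
    (hfront : φlim + t * (vlim - μ) < 0) : Tendsto (fun ε => v ε t) l (𝓝 vlim) := by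
  set d := φlim + t * (vlim - μ)
  have hd : ∀ᶠ ε in l, ε * log (u ε 0) + t * (v ε 0 - μ) < d / 2 :=
    (hφ.add ((hv.sub_const μ).const_mul t)).eventually (eventually_lt_nhds (by linarith))
  have hlower : ∀ᶠ ε in l, v ε 0 * (1 - exp (d / 2 / ε) * t) ≤ v ε t := by
    filter_upwards [hsol, hl self_mem_nhdsWithin, hd, hv.eventually (eventually_ge_nhds hvlim)]
      with ε h hε hdε hμv
    have hu : ∀ x ∈ Icc 0 t, u ε x ≤ exp (d / 2 / ε) := fun x hx => by
      rw [← log_le_iff_le_exp (h.u_pos x hx.1), le_div_iff₀ hε]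
      have hψ := h.mul_log_u_sub_le hε.ne' le_rfl hx.1
      have hx' : (v ε 0 - μ) * (x - 0) ≤ t * (v ε 0 - μ) := by nlinarith [hx.2]
      linarith
    simpa only [sub_zero] using h.v_mul_le_of_u_le le_rfl ht hu
  have hM : Tendsto (fun ε => exp (d / 2 / ε)) l (𝓝 0) :=
    tendsto_exp_atBot.comp (tendsto_div_atBot_of_tendsto_neg hl tendsto_const_nhds (by linarith))
  have hlim : Tendsto (fun ε => v ε 0 * (1 - exp (d / 2 / ε) * t)) l (𝓝 vlim) := by
    simpa using hv.mul ((hM.mul_const t).const_sub 1)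
  refine tendsto_of_tendsto_of_tendsto_of_le_of_le' hlim hv hlower ?_
  filter_upwards [hsol] with ε h
  exact h.v_antitoneOn (mem_Ici.2 le_rfl) ht ht

theorem tendsto_energy (hl : l ≤ 𝓝[>] 0) (hsol : ∀ᶠ ε in l, IsODESol μ ε (u ε) (v ε))
    (hφ : Tendsto (fun ε => ε * log (u ε 0)) l (𝓝 φlim)) (hφneg : φlim < 0)
    (hv : Tendsto (fun ε => v ε 0) l (𝓝 vlim)) (hvlim : vlim ≠ 0) :
    Tendsto (fun ε => ε * u ε 0 + Q μ (v ε 0)) l (𝓝 (Q μ vlim)) := by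
  have hε : Tendsto (fun ε : ℝ => ε) l (𝓝 0) := tendsto_id.mono_left (hl.trans nhdsWithin_le_nhds)
  have hu : Tendsto (fun ε => ε * exp (ε * log (u ε 0) / ε)) l (𝓝 0) := by
    simpa using hε.mul (tendsto_exp_atBot.comp (tendsto_div_atBot_of_tendsto_neg hl hφ hφneg))
  have hu' : Tendsto (fun ε => ε * u ε 0) l (𝓝 0) := by
    refine hu.congr' ?_
    filter_upwards [hsol, hl self_mem_nhdsWithin] with ε h hε
    rw [mul_div_cancel_left₀ _ hε.ne', exp_log (h.u_pos 0 le_rfl)]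
  simpa using hu'.add ((hasDerivAt_Q μ hvlim).continuousAt.tendsto.comp hv)

theorem eventually_lt_v (hl : l ≤ 𝓝[>] 0) (hsol : ∀ᶠ ε in l, IsODESol μ ε (u ε) (v ε))
    {q : ℝ} (hE : Tendsto (fun ε => ε * u ε 0 + Q μ (v ε 0)) l (𝓝 q)) {a : ℝ} (ha : 0 < a)
    (haμ : a ≤ μ) (hq : q < Q μ a) {t : ℝ} (ht : 0 ≤ t) : ∀ᶠ ε in l, a < v ε t := by
  filter_upwards [hsol, hl self_mem_nhdsWithin, hE.eventually (eventually_lt_nhds hq)]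
    with ε h hε hEε
  by_contra! hva
  have hQ : Q μ a ≤ Q μ (v ε t) :=
    strictAntiOn_Q.antitoneOn ⟨h.v_pos t ht, hva.trans haμ⟩ ⟨ha, haμ⟩ hva
  have henergy := h.energy_eq hε.ne' ht
  have hεu := mul_pos hε (h.u_pos t ht)
  linarith

theorem eventually_v_lt (hμ : 0 < μ) (hl : l ≤ 𝓝[>] 0)
    (hsol : ∀ᶠ ε in l, IsODESol μ ε (u ε) (v ε))
    (hφ : Tendsto (fun ε => ε * log (u ε 0)) l (𝓝 φlim)) (hvlim : μ < vlim)
    (hE : Tendsto (fun ε => ε * u ε 0 + Q μ (v ε 0)) l (𝓝 (Q μ vlim))) {b : ℝ} (hb : 0 < b)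
    (hbμ : b ≤ μ) (hQb : Q μ b < Q μ vlim) {t : ℝ} (ht : 0 < t)
    (hfront : 0 < φlim + t * (vlim - μ)) : ∀ᶠ ε in l, v ε t < b := by
  obtain ⟨w, hμw, hwv, hwfront⟩ : ∃ w, μ < w ∧ w < vlim ∧ 0 < φlim + t * (w - μ) := by
    have key : ∀ w, μ - φlim / t < w ↔ 0 < φlim + t * (w - μ) := fun w => by
      rw [sub_lt_comm, lt_div_iff₀ ht]
      constructor <;> intro <;> nlinarith
    obtain ⟨w, hw, hwv⟩ := exists_between (max_lt hvlim ((key vlim).2 hfront))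
    exact ⟨w, (le_max_left _ _).trans_lt hw, hwv, (key w).1 ((le_max_right _ _).trans_lt hw)⟩
  set c := Q μ vlim - max (Q μ b) (Q μ w)
  have hc : 0 < c := sub_pos.2 (max_lt hQb
    ((strictMonoOn_Q hμ) (mem_Ici.2 hμw.le) (mem_Ici.2 hvlim.le) hwv))
  have hband : ∀ x ∈ Icc b w, Q μ x ≤ Q μ vlim - c := fun x hx => by
    simpa [c] using (convexOn_Q hμ.le).le_max_of_mem_Icc hb (hb.trans (hbμ.trans_lt hμw)) hx
  set K := w / (c / 2 * b)
  set C := Q μ vlim + 1 - Q μ μ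
  have hε0 : Tendsto (fun ε : ℝ => ε) l (𝓝 0) := tendsto_id.mono_left (hl.trans nhdsWithin_le_nhds)
  have hεlogε : Tendsto (fun ε => ε * log ε) l (𝓝 0) := by
    simpa [Function.comp_def] using (continuous_mul_log.tendsto 0).comp hε0
  have hlim : Tendsto (fun ε => ε * log (u ε 0) + (w - μ) * (t - ε * K) -
      (ε * log C - ε * log ε)) l (𝓝 (φlim + (w - μ) * t)) := by
    simpa using (hφ.add (((hε0.mul_const K).const_sub t).const_mul (w - μ))).sub
      ((hε0.mul_const (log C)).sub hεlogε)
  filter_upwards [hsol, hl self_mem_nhdsWithin,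
    hE.eventually (eventually_ge_nhds (show Q μ vlim - c / 2 < Q μ vlim by linarith)),
    hE.eventually (eventually_le_nhds (show Q μ vlim < Q μ vlim + 1 by linarith)),
    hlim.eventually (eventually_gt_nhds (by linarith : 0 < φlim + (w - μ) * t)),
    (hε0.mul_const K).eventually (eventually_le_nhds (by simpa using ht))]
    with ε h hε hElo hEhi hψ hεK
  by_contra! hbt
  have hψT := h.mul_log_u_zero_add_le (C := C) hμ hε hb (hbμ.trans hμw.le) (half_pos hc)
    (fun x hx => by linarith [hband x hx]) (by linarith) hbt (sub_nonneg.2 hεK)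
  linarith

theorem tendsto_v_after_front (hμ : 0 < μ) (hl : l ≤ 𝓝[>] 0)
    (hsol : ∀ᶠ ε in l, IsODESol μ ε (u ε) (v ε))
    (hφ : Tendsto (fun ε => ε * log (u ε 0)) l (𝓝 φlim)) (hφneg : φlim < 0)
    (hv : Tendsto (fun ε => v ε 0) l (𝓝 vlim)) (hvlim : μ < vlim) {vminus : ℝ}
    (hm0 : 0 < vminus) (hmμ : vminus < μ) (hQm : Q μ vminus = Q μ vlim) {t : ℝ} (ht : 0 < t)
    (hfront : 0 < φlim + t * (vlim - μ)) : Tendsto (fun ε => v ε t) l (𝓝 vminus) := by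
  have hE := tendsto_energy hl hsol hφ hφneg hv (hμ.trans hvlim).ne'
  have hQ_lt : ∀ a, 0 < a → a < vminus → Q μ vlim < Q μ a := fun a ha hav => by
    rw [← hQm]
    exact strictAntiOn_Q ⟨ha, (hav.trans hmμ).le⟩ ⟨hm0, hmμ.le⟩ hav
  have hlt_Q : ∀ b, vminus < b → b ≤ μ → Q μ b < Q μ vlim := fun b hb hbμ => by
    rw [← hQm]
    exact strictAntiOn_Q ⟨hm0, hmμ.le⟩ ⟨hm0.trans hb, hbμ⟩ hb
  refine tendsto_order.2 ⟨fun a ha => ?_, fun b hb => ?_⟩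
  · rcases le_or_gt a 0 with ha0 | ha0
    · filter_upwards [hsol] with ε h using ha0.trans_lt (h.v_pos t ht.le)
    · exact eventually_lt_v hl hsol hE ha0 (ha.trans hmμ).le (hQ_lt a ha0 ha) ht.le
  · have hb' : vminus < min b μ := lt_min hb hmμ
    filter_upwards [eventually_v_lt hμ hl hsol hφ hvlim hE (hm0.trans hb') (min_le_right _ _)
      (hlt_Q _ hb' (min_le_right _ _)) ht hfront] with ε hε
    exact hε.trans_le (min_le_left _ _)

end Limits

theorem nutrient_jump_general (μ : ℝ) (hμ : 0 < μ)
    (u v : ℝ → ℝ → ℝ) (φ0 v0 : ℝ → ℝ) (φlim vlim vminus : ℝ)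
    (hsol : ∀ ε ∈ Set.Ioc (0:ℝ) 1, IsODESol μ ε (u ε) (v ε))
    (hu0 : ∀ ε ∈ Set.Ioc (0:ℝ) 1, u ε 0 = Real.exp (φ0 ε / ε))
    (hv0 : ∀ ε ∈ Set.Ioc (0:ℝ) 1, v ε 0 = v0 ε)
    (hφconv : Tendsto φ0 (nhdsWithin 0 (Set.Ioc 0 1)) (𝓝 φlim))
    (hφneg : φlim < 0)
    (hvconv : Tendsto v0 (nhdsWithin 0 (Set.Ioc 0 1)) (𝓝 vlim))
    (hvlim : μ < vlim)
    (hm0 : 0 < vminus) (hmμ : vminus < μ) (hQm : Q μ vminus = Q μ vlim) :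
    (∀ t, 0 ≤ t → t < -φlim / (vlim - μ) →
        Tendsto (fun ε => v ε t) (nhdsWithin 0 (Set.Ioc 0 1)) (𝓝 vlim)) ∧
    (∀ t, -φlim / (vlim - μ) < t →
        Tendsto (fun ε => v ε t) (nhdsWithin 0 (Set.Ioc 0 1)) (𝓝 vminus)) := by
  have hl : 𝓝[Ioc (0:ℝ) 1] 0 ≤ 𝓝[>] 0 := nhdsWithin_mono _ Ioc_subset_Ioi_self
  have hsol' := eventually_nhdsWithin_of_forall (a := 0) hsol
  have hφ : Tendsto (fun ε => ε * log (u ε 0)) (𝓝[Ioc 0 1] 0) (𝓝 φlim) :=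
    hφconv.congr' <| eventually_nhdsWithin_of_forall fun ε hε => by
      show φ0 ε = ε * log (u ε 0)
      rw [hu0 ε hε, log_exp, mul_div_cancel₀ _ hε.1.ne']
  have hv : Tendsto (fun ε => v ε 0) (𝓝[Ioc 0 1] 0) (𝓝 vlim) :=
    hvconv.congr' <| eventually_nhdsWithin_of_forall fun ε hε => (hv0 ε hε).symm
  have hvμ : 0 < vlim - μ := sub_pos.2 hvlim
  refine ⟨fun t ht hτ => tendsto_v_before_front hl hsol' hφ hv hvlim ht ?_,
    fun t hτ => tendsto_v_after_front hμ hl hsol' hφ hφneg hv hvlim hm0 hmμ hQm ?_ ?_⟩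
  · rw [lt_div_iff₀ hvμ] at hτ
    linarith
  · exact (div_pos (neg_pos.2 hφneg) hvμ).trans hτ
  · rw [div_lt_iff₀ hvμ] at hτ
    linarith

/-- Parts (i) and (iii) of Theorem 2.1: ahead of the front (`v⁰ > μ`), the nutrient
stays at `v⁰` before the jump time `τ = -φ⁰/(v⁰ - μ)` and equals the lower branch
`v⁰₋` afterwards. -/
theorem nutrient_jump (μ QM : ℝ) (hμ : 0 < μ)
    (u v : ℝ → ℝ → ℝ) (φ0 v0 : ℝ → ℝ) (φlim vlim vminus : ℝ)
    (hsol : ∀ ε ∈ Set.Ioc (0:ℝ) 1, IsODESol μ ε (u ε) (v ε))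
    (hu0 : ∀ ε ∈ Set.Ioc (0:ℝ) 1, u ε 0 = Real.exp (φ0 ε / ε))
    (hv0 : ∀ ε ∈ Set.Ioc (0:ℝ) 1, v ε 0 = v0 ε)
    (hQM : ∀ ε ∈ Set.Ioc (0:ℝ) 1, ε * u ε 0 + Q μ (v0 ε) ≤ QM)
    (hφconv : Tendsto φ0 (nhdsWithin 0 (Set.Ioc 0 1)) (𝓝 φlim))
    (hφneg : φlim < 0)
    (hvconv : Tendsto v0 (nhdsWithin 0 (Set.Ioc 0 1)) (𝓝 vlim))
    (hvlim : μ < vlim)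
    (hm0 : 0 < vminus) (hmμ : vminus < μ) (hQm : Q μ vminus = Q μ vlim) :
    (∀ t, 0 ≤ t → t < -φlim / (vlim - μ) →
        Tendsto (fun ε => v ε t) (nhdsWithin 0 (Set.Ioc 0 1)) (𝓝 vlim)) ∧
    (∀ t, -φlim / (vlim - μ) < t →
        Tendsto (fun ε => v ε t) (nhdsWithin 0 (Set.Ioc 0 1)) (𝓝 vminus)) :=
  nutrient_jump_general μ hμ u v φ0 v0 φlim vlim vminus hsol hu0 hv0 hφconv hφneg hvconv hvlim hm0
    hmμ hQm
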